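/- Let n ≥ 2, α₀ an invertible real n×n matrix, x* ∈ ℝ^n, Δᴮ : ℝ^{n−1} → ℝ^n a function, ż ∈ ℝ^{n−1}, R an invertible real (n−1)×(n−1) matrix, ρ ≥ 0, and M₁, …, M_k ∈ ℝ^{n×(n−1)} with k ≥ 1. Suppose that for every z ∈ ℝ^{n−1} with ‖R(z − ż)‖₂ ≤ ρ there exists M in the convex hull of {M₁, …, M_k} such that Δᴮ(z) − Δᴮ(ż) = M(z − ż). Then for every z with ‖R(z − ż)‖₂ ≤ ρ, ‖α₀(Δᴮ(z) − x*)‖₂ ≤ ‖α₀(Δᴮ(ż) − x*)‖₂ + (max_{1≤j≤k} ‖α₀ M_j R⁻¹‖_{2→2}) · ρ. -/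

import Mathlib

open Matrix

/-- Euclidean norm of a vector in `ℝ^n`. -/
noncomputable def enorm2 {n : ℕ} (v : Fin n → ℝ) : ℝ := Real.sqrt (∑ i, v i ^ 2)

/-- The `ℓ₂ → ℓ₂` induced operator norm of a real matrix. -/
noncomputable def opNorm2 {m n : ℕ} (A : Matrix (Fin m) (Fin n) ℝ) : ℝ :=
  ‖LinearMap.toContinuousLinearMap (Matrix.toEuclideanLin A)‖

/-!
Writing the increment `Δᴮ(z) − Δᴮ(ż) = M (z − ż)` as `(M R⁻¹)(R (z − ż))`, the triangle inequality
bounds the left-hand side by `‖α₀(Δᴮ(ż) − x*)‖₂ + ‖α₀ M R⁻¹‖₂→₂ ρ`. Since `M ↦ ‖α₀ M R⁻¹‖₂→₂` is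
convex, its value at a point of the convex hull of the corners is at most its value at some corner.
-/

open scoped Matrix.Norms.L2Operator

theorem enorm2_eq_norm {n : ℕ} (v : Fin n → ℝ) :
    enorm2 v = ‖(EuclideanSpace.equiv (Fin n) ℝ).symm v‖ := by
  simp [enorm2, EuclideanSpace.norm_eq, sq_abs]

theorem opNorm2_eq_norm {m n : ℕ} (A : Matrix (Fin m) (Fin n) ℝ) : opNorm2 A = ‖A‖ := rfl

theorem enorm2_nonneg {n : ℕ} (v : Fin n → ℝ) : 0 ≤ enorm2 v := Real.sqrt_nonneg _

theorem opNorm2_nonneg {m n : ℕ} (A : Matrix (Fin m) (Fin n) ℝ) : 0 ≤ opNorm2 A := norm_nonneg _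

theorem enorm2_add_le {n : ℕ} (v w : Fin n → ℝ) : enorm2 (v + w) ≤ enorm2 v + enorm2 w := by
  simpa only [enorm2_eq_norm, map_add] using norm_add_le _ _

theorem enorm2_mulVec_le {m n : ℕ} (A : Matrix (Fin m) (Fin n) ℝ) (v : Fin n → ℝ) :
    enorm2 (A *ᵥ v) ≤ opNorm2 A * enorm2 v := by
  rw [enorm2_eq_norm, enorm2_eq_norm, opNorm2_eq_norm]
  exact A.l2_opNorm_mulVec ((EuclideanSpace.equiv (Fin n) ℝ).symm v)

theorem convexOn_opNorm2_mul_mul {l m n p : ℕ} (P : Matrix (Fin l) (Fin m) ℝ)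
    (Q : Matrix (Fin n) (Fin p) ℝ) :
    ConvexOn ℝ Set.univ fun X : Matrix (Fin m) (Fin n) ℝ => opNorm2 (P * X * Q) :=
  convexOn_univ_norm.comp_linearMap
    ((mulRightLinearMap (Fin l) ℝ Q).comp (mulLeftLinearMap (Fin n) ℝ P))

theorem ConvexOn.le_ciSup_of_mem_convexHull {E ι : Type*} [AddCommGroup E] [Module ℝ E]
    [Finite ι] {f : E → ℝ} (hf : ConvexOn ℝ Set.univ f) (v : ι → E) {x : E}
    (hx : x ∈ convexHull ℝ (Set.range v)) : f x ≤ ⨆ i, f (v i) := by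
  obtain ⟨_, ⟨i, rfl⟩, hi⟩ := hf.exists_ge_of_mem_convexHull (Set.subset_univ _) hx
  exact hi.trans (le_ciSup (Set.finite_range (f ∘ v)).bddAbove i)

theorem Matrix.mulVec_eq_mul_inv_mulVec {m n α : Type*} [Fintype m] [Fintype n] [DecidableEq n]
    [CommRing α] (A : Matrix m n α) {R : Matrix n n α} (hR : IsUnit R) (v : n → α) :
    A *ᵥ v = (A * R⁻¹) *ᵥ (R *ᵥ v) := by
  rw [mulVec_mulVec, Matrix.mul_assoc, nonsing_inv_mul R ((isUnit_iff_isUnit_det R).mp hR),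
    Matrix.mul_one]

theorem reset_gain_bound_general {n k : ℕ}
    (α₀ : Matrix (Fin n) (Fin n) ℝ)
    (xs : Fin n → ℝ)
    (ΔB : (Fin (n - 1) → ℝ) → (Fin n → ℝ))
    (zc : Fin (n - 1) → ℝ)
    (R : Matrix (Fin (n - 1)) (Fin (n - 1)) ℝ) (hR : IsUnit R)
    (ρ : ℝ)
    (M : Fin k → Matrix (Fin n) (Fin (n - 1)) ℝ)
    (hM : ∀ z : Fin (n - 1) → ℝ, enorm2 (R.mulVec (z - zc)) ≤ ρ →
      ∃ A ∈ convexHull ℝ (Set.range M), ΔB z - ΔB zc = A.mulVec (z - zc)) :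
    ∀ z : Fin (n - 1) → ℝ, enorm2 (R.mulVec (z - zc)) ≤ ρ →
      enorm2 (α₀.mulVec (ΔB z - xs)) ≤
        enorm2 (α₀.mulVec (ΔB zc - xs))
          + (⨆ j : Fin k, opNorm2 (α₀ * M j * R⁻¹)) * ρ := by
  intro z hz
  obtain ⟨A, hA, hΔ⟩ := hM z hz
  have hgain : opNorm2 (α₀ * A * R⁻¹) ≤ ⨆ j, opNorm2 (α₀ * M j * R⁻¹) :=
    (convexOn_opNorm2_mul_mul α₀ R⁻¹).le_ciSup_of_mem_convexHull M hA
  have hsplit : α₀ *ᵥ (ΔB z - xs)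
      = α₀ *ᵥ (ΔB zc - xs) + (α₀ * A * R⁻¹) *ᵥ (R *ᵥ (z - zc)) := by
    rw [← mulVec_eq_mul_inv_mulVec _ hR, ← mulVec_mulVec, ← mulVec_add, ← hΔ, sub_add_sub_cancel']
  calc enorm2 (α₀ *ᵥ (ΔB z - xs))
      ≤ enorm2 (α₀ *ᵥ (ΔB zc - xs)) + enorm2 ((α₀ * A * R⁻¹) *ᵥ (R *ᵥ (z - zc))) :=
        hsplit ▸ enorm2_add_le _ _
    _ ≤ enorm2 (α₀ *ᵥ (ΔB zc - xs)) + opNorm2 (α₀ * A * R⁻¹) * enorm2 (R *ᵥ (z - zc)) := by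
        gcongr
        exact enorm2_mulVec_le _ _
    _ ≤ enorm2 (α₀ *ᵥ (ΔB zc - xs)) + (⨆ j, opNorm2 (α₀ * M j * R⁻¹)) * ρ := by
        have hz_nonneg := enorm2_nonneg (R *ᵥ (z - zc))
        gcongr
        exact (opNorm2_nonneg _).trans hgain

/-- **Gain bound through a linear inclusion of the reset map.**
If `Δᴮ` admits a linear inclusion with corners `M₁, …, M_k` on the ellipsoid
`{z : ‖R(z − ż)‖₂ ≤ ρ}`, then for every `z` in that ellipsoid,
`‖α₀(Δᴮ(z) − x*)‖₂ ≤ ‖α₀(Δᴮ(ż) − x*)‖₂ + (max_j ‖α₀ M_j R⁻¹‖₂→₂) ρ`. -/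
theorem reset_gain_bound {n k : ℕ} (hn : 2 ≤ n) (hk : 1 ≤ k)
    (α₀ : Matrix (Fin n) (Fin n) ℝ) (hα₀ : IsUnit α₀)
    (xs : Fin n → ℝ)
    (ΔB : (Fin (n - 1) → ℝ) → (Fin n → ℝ))
    (zc : Fin (n - 1) → ℝ)
    (R : Matrix (Fin (n - 1)) (Fin (n - 1)) ℝ) (hR : IsUnit R)
    (ρ : ℝ) (hρ : 0 ≤ ρ)
    (M : Fin k → Matrix (Fin n) (Fin (n - 1)) ℝ)
    (hM : ∀ z : Fin (n - 1) → ℝ, enorm2 (R.mulVec (z - zc)) ≤ ρ →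
      ∃ A ∈ convexHull ℝ (Set.range M), ΔB z - ΔB zc = A.mulVec (z - zc)) :
    ∀ z : Fin (n - 1) → ℝ, enorm2 (R.mulVec (z - zc)) ≤ ρ →
      enorm2 (α₀.mulVec (ΔB z - xs)) ≤
        enorm2 (α₀.mulVec (ΔB zc - xs))
          + (⨆ j : Fin k, opNorm2 (α₀ * M j * R⁻¹)) * ρ :=
  reset_gain_bound_general α₀ xs ΔB zc R hR ρ M hM
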